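/- arXiv:0710.2889 — 4 statements merged into one kernel-verified Lean document; each statement's English description precedes it below -/
import Mathlib

section
/- Let ω: ℕ × ℕ → ℝ≥0 satisfy symmetry ω(i,j)=ω(j,i), monotonicity (ω(i,j) ≤ ω(i,k) whenever i<j<k or i>j>k), and the triangle inequality ω(i,j) ≤ ω(i,k)+ω(k,j). Let σ* be a ranking (a bijection V → {1,…,n}) on a finite set V, and define Δ(u,v) = ω(σ*(u), σ*(v)) if σ*(u) < σ*(v) and 0 otherwise. Then Δ satisfies the triangle inequality: Δ(u,v) ≤ Δ(u,w) + Δ(w,v) for all u,v,w ∈ V. -/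
/-!
If `w` is ranked strictly between `u` and `v`, this is the triangle inequality of `ω`; if it is
ranked outside, the single nonzero term on the right dominates `ω(σ*(u), σ*(v))` by monotonicity;
if `v` is not ranked after `u`, the left side vanishes.
-/

section ForwardWeight

variable {α : Type*} [LinearOrder α] (ω : α → α → ℝ)

def forwardWeight (a b : α) : ℝ := if a < b then ω a b else 0

lemma forwardWeight_of_lt {a b : α} (h : a < b) : forwardWeight ω a b = ω a b := if_pos h

lemma forwardWeight_of_not_lt {a b : α} (h : ¬a < b) : forwardWeight ω a b = 0 := if_neg h

lemma forwardWeight_nonneg (hnn : ∀ a b, 0 ≤ ω a b) (a b : α) : 0 ≤ forwardWeight ω a b := by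
  unfold forwardWeight
  split_ifs
  exacts [hnn a b, le_rfl]

lemma forwardWeight_le_add (hnn : ∀ a b, 0 ≤ ω a b)
    (hmon_right : ∀ a b c, a < b → b < c → ω a b ≤ ω a c)
    (hmon_left : ∀ a b c, a < b → b < c → ω b c ≤ ω a c)
    (htri : ∀ a b c, ω a b ≤ ω a c + ω c b) (a b c : α) :
    forwardWeight ω a b ≤ forwardWeight ω a c + forwardWeight ω c b := by
  have hac_nonneg := forwardWeight_nonneg ω hnn a c
  have hcb_nonneg := forwardWeight_nonneg ω hnn c b
  by_cases hab : a < b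
  swap
  · rw [forwardWeight_of_not_lt ω hab]
    exact add_nonneg hac_nonneg hcb_nonneg
  rw [forwardWeight_of_lt ω hab]
  rcases lt_trichotomy c a with hca | rfl | hac
  · calc ω a b ≤ ω c b := hmon_left c a b hca hab
      _ = forwardWeight ω c b := (forwardWeight_of_lt ω (hca.trans hab)).symm
      _ ≤ _ := le_add_of_nonneg_left hac_nonneg
  · rw [forwardWeight_of_lt ω hab]
    exact le_add_of_nonneg_left hac_nonneg
  rcases lt_trichotomy c b with hcb | rfl | hbc
  · rw [forwardWeight_of_lt ω hac, forwardWeight_of_lt ω hcb]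
    exact htri a b c
  · rw [forwardWeight_of_lt ω hab]
    exact le_add_of_nonneg_right hcb_nonneg
  · calc ω a b ≤ ω a c := hmon_right a b c hab hbc
      _ = forwardWeight ω a c := (forwardWeight_of_lt ω hac).symm
      _ ≤ _ := le_add_of_nonneg_right hcb_nonneg

end ForwardWeight

/-- admissible weight functions induce a triangle inequality on Δ. -/
theorem delta_triangle {V : Type*} {n : ℕ}
    (ω : ℕ → ℕ → ℝ) (hnn : ∀ i j, 0 ≤ ω i j)
    (hsym : ∀ i j, ω i j = ω j i)
    (hmon : ∀ i j k, (i < j ∧ j < k) ∨ (k < j ∧ j < i) → ω i j ≤ ω i k)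
    (htri : ∀ i j k, ω i j ≤ ω i k + ω k j)
    (σs : V ≃ Fin n)
    (Δ : V → V → ℝ)
    (hΔ : ∀ u v, Δ u v = if ((σs u : ℕ) < (σs v : ℕ)) then ω (σs u) (σs v) else 0) :
    ∀ u v w : V, Δ u v ≤ Δ u w + Δ w v := by
  have hmon_right : ∀ i j k, i < j → j < k → ω i j ≤ ω i k :=
    fun i j k hij hjk => hmon i j k (.inl ⟨hij, hjk⟩)
  have hmon_left : ∀ i j k, i < j → j < k → ω j k ≤ ω i k := fun i j k hij hjk => by
    rw [hsym j k, hsym i k]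
    exact hmon k j i (.inr ⟨hij, hjk⟩)
  intro u v w
  rw [hΔ, hΔ, hΔ]
  exact forwardWeight_le_add ω hnn hmon_right hmon_left htri _ _ _
end

section
/- Let h: V × V → {0,1} be a binary preference function on a finite set V with h(u,v) + h(v,u) = 1 for all u ≠ v, and suppose h(u,v) = h(v,w) = h(w,u) = 1 for distinct u,v,w (a 3-cycle). Let Δ: V × V → ℝ≥0 satisfy the triangle inequality Δ(a,c) ≤ Δ(a,b) + Δ(b,c). Define β = (1/3)(Δ(u,v) + Δ(v,w) + Δ(w,u)) and γ = (1/3)(Δ(v,u) + Δ(w,v) + Δ(u,w)). Then β ≤ 2γ. -/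
theorem cycle_sum_le_two_nsmul_reverse_cycle_sum {V M : Type*} [AddCommMonoid M] [PartialOrder M]
    [IsOrderedAddMonoid M] (Δ : V → V → M) (htri : ∀ a b c : V, Δ a c ≤ Δ a b + Δ b c)
    (u v w : V) : Δ u v + Δ v w + Δ w u ≤ 2 • (Δ v u + Δ w v + Δ u w) :=
  calc Δ u v + Δ v w + Δ w u
      ≤ (Δ u w + Δ w v) + (Δ v u + Δ u w) + (Δ w v + Δ v u) :=
        add_le_add_three (htri u w v) (htri v u w) (htri w v u)
    _ = 2 • (Δ v u + Δ w v + Δ u w) := by rw [two_nsmul]; abel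

theorem beta_le_two_gamma_general {V : Type*} (Δ : V → V → ℝ)
    (u v w : V)
    (htri : ∀ a b c : V, Δ a c ≤ Δ a b + Δ b c) :
    (1 / 3) * (Δ u v + Δ v w + Δ w u) ≤ 2 * ((1 / 3) * (Δ v u + Δ w v + Δ u w)) := by
  have hcycle := cycle_sum_le_two_nsmul_reverse_cycle_sum Δ htri u v w
  rw [nsmul_eq_mul, Nat.cast_ofNat] at hcycle
  linarith

/-- on a 3-cycle of the preference function, β ≤ 2γ for any Δ
satisfying the triangle inequality. -/
theorem beta_le_two_gamma {V : Type*} (h : V → V → ℝ) (Δ : V → V → ℝ)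
    (hbin : ∀ a b : V, h a b = 0 ∨ h a b = 1)
    (hcons : ∀ a b : V, a ≠ b → h a b + h b a = 1)
    (u v w : V) (huv : u ≠ v) (hvw : v ≠ w) (huw : u ≠ w)
    (hcyc : h u v = 1 ∧ h v w = 1 ∧ h w u = 1)
    (hnn : ∀ a b : V, 0 ≤ Δ a b)
    (htri : ∀ a b c : V, Δ a c ≤ Δ a b + Δ b c) :
    (1 / 3) * (Δ u v + Δ v w + Δ w u) ≤ 2 * ((1 / 3) * (Δ v u + Δ w v + Δ u w)) :=
  beta_le_two_gamma_general Δ u v w htri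
end

section
/- Fix V = {u,v,w} and a preference function h with h(u,v) = h(v,w) = h(w,u) = 1 (a 3-cycle). For any deterministic map A that takes (V,h) and outputs a linear ranking σ of V, there exists a two-class partition τ* of V such that the bipartite misranking loss of σ against τ* is exactly 2/3 while the misranking loss of h against τ* is exactly 1/3. Hence no deterministic reduction from a preference function to a ranking can guarantee ranking loss less than twice the classifier loss. -/
/-!
Let `c` be the element that `σ` ranks last, and let `c` be the only positive element. Then `σ`
misorders both pairs involving `c`, whereas in the 3-cycle `h` every vertex is preferred to
exactly one other vertex, so `h` misorders exactly one pair.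
-/

open Finset

section

variable {V : Type*} [DecidableEq V]

/-- The two-class partition whose only positive element (class `0`) is `c`. -/
def singlePositive (c : V) : V → Fin 2 := fun z => if z = c then 0 else 1

lemma singlePositive_lt_iff (c a b : V) :
    singlePositive c b < singlePositive c a ↔ b = c ∧ a ≠ c := by
  unfold singlePositive
  by_cases hb : b = c <;> by_cases ha : a = c <;> simp [ha, hb]

variable [Fintype V]

lemma sum_sum_mul_singlePositive (f : V → V → ℝ) (c : V) :
    ∑ a, ∑ b, f a b * (if singlePositive c b < singlePositive c a then 1 else 0) =
      ∑ a ∈ univ.erase c, f a c := by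
  simp only [singlePositive_lt_iff, mul_ite, mul_one, mul_zero, ite_and]
  simp [sum_ite, filter_ne']

lemma sum_erase_last_lt_last {n : ℕ} (σ : V ≃ Fin (n + 1)) :
    ∑ a ∈ univ.erase (σ.symm (Fin.last n)), (if σ a < Fin.last n then (1 : ℝ) else 0) = n := by
  have hlt : ∀ a ∈ univ.erase (σ.symm (Fin.last n)), σ a < Fin.last n := by
    intro a ha
    exact Fin.lt_last_iff_ne_last.mpr fun e => (mem_erase.mp ha).1 (σ.eq_symm_apply.mpr e)
  rw [sum_congr rfl fun a ha => if_pos (hlt a ha), sum_const, card_erase_of_mem (mem_univ _),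
    card_univ, Fintype.card_congr σ, Fintype.card_fin]
  simp

lemma sum_erase_third_eq_one_of_cycle (u v w : V) (huv : u ≠ v) (hvw : v ≠ w) (huw : u ≠ w)
    (huniv : (univ : Finset V) = {u, v, w}) (h : V → V → ℝ)
    (htour : ∀ a b : V, a ≠ b → h a b + h b a = 1) (hvw1 : h v w = 1) (hwu : h w u = 1) :
    ∑ a ∈ univ.erase w, h a w = 1 := by
  have huw0 : h u w = 0 := by linarith [htour w u huw.symm]
  rw [huniv, erase_insert_of_ne huw, erase_insert_of_ne hvw, erase_singleton, insert_empty,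
    sum_pair huv, huw0, hvw1, zero_add]

lemma sum_erase_eq_one_of_cycle (u v w : V) (huv : u ≠ v) (hvw : v ≠ w) (huw : u ≠ w)
    (huniv : (univ : Finset V) = {u, v, w}) (h : V → V → ℝ)
    (htour : ∀ a b : V, a ≠ b → h a b + h b a = 1)
    (hcyc : h u v = 1 ∧ h v w = 1 ∧ h w u = 1) (c : V) :
    ∑ a ∈ univ.erase c, h a c = 1 := by
  obtain ⟨huv1, hvw1, hwu1⟩ := hcyc
  have hc : c ∈ ({u, v, w} : Finset V) := huniv ▸ mem_univ c
  simp only [mem_insert, mem_singleton] at hc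
  have hrot : ∀ a b d : V, ({a, b, d} : Finset V) = {b, d, a} := by
    intro a b d; ext; simp only [mem_insert, mem_singleton]; tauto
  rcases hc with rfl | rfl | rfl
  · exact sum_erase_third_eq_one_of_cycle v w c hvw huw.symm huv.symm
      (huniv.trans (hrot _ _ _)) h htour hwu1 huv1
  · exact sum_erase_third_eq_one_of_cycle w u c huw.symm huv hvw.symm
      (by rw [huniv, hrot, hrot]) h htour huv1 hvw1
  · exact sum_erase_third_eq_one_of_cycle u v c huv hvw huw huniv h htour hvw1 hwu1

end

theorem deterministic_lower_bound_general {V : Type*} [Fintype V] [DecidableEq V]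
    (u v w : V) (huv : u ≠ v) (hvw : v ≠ w) (huw : u ≠ w)
    (huniv : (Finset.univ : Finset V) = {u, v, w})
    (h : V → V → ℝ)
    (htour : ∀ a b : V, a ≠ b → h a b + h b a = 1)
    (hcyc : h u v = 1 ∧ h v w = 1 ∧ h w u = 1)
    (σ : V ≃ Fin 3) :
    ∃ τ : V → Fin 2,
      (3 : ℝ)⁻¹ * (∑ a : V, ∑ b : V,
          (if σ a < σ b then (1 : ℝ) else 0) * (if τ b < τ a then 1 else 0)) = 2 / 3 ∧
      (3 : ℝ)⁻¹ * (∑ a : V, ∑ b : V,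
          h a b * (if τ b < τ a then 1 else 0)) = 1 / 3 := by
  refine ⟨singlePositive (σ.symm (Fin.last 2)), ?_, ?_⟩
  · rw [sum_sum_mul_singlePositive (fun a b => if σ a < σ b then (1 : ℝ) else 0),
      Equiv.apply_symm_apply, sum_erase_last_lt_last σ]
    norm_num
  · rw [sum_sum_mul_singlePositive h,
      sum_erase_eq_one_of_cycle u v w huv hvw huw huniv h htour hcyc]
    norm_num

/-- lower bound for deterministic reductions.  For V = {u,v,w}
with a cyclic preference function h, whatever ranking σ a deterministic
algorithm outputs, some bipartite ground truth τ* gives σ loss exactly 2/3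
while h has loss exactly 1/3. -/
theorem deterministic_lower_bound {V : Type*} [Fintype V] [DecidableEq V]
    (u v w : V) (huv : u ≠ v) (hvw : v ≠ w) (huw : u ≠ w)
    (huniv : (Finset.univ : Finset V) = {u, v, w})
    (h : V → V → ℝ)
    (hbin : ∀ a b : V, h a b = 0 ∨ h a b = 1)
    (htour : ∀ a b : V, a ≠ b → h a b + h b a = 1)
    (hcyc : h u v = 1 ∧ h v w = 1 ∧ h w u = 1)
    (σ : V ≃ Fin 3) :
    ∃ τ : V → Fin 2,
      (3 : ℝ)⁻¹ * (∑ a : V, ∑ b : V,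
          (if σ a < σ b then (1 : ℝ) else 0) * (if τ b < τ a then 1 else 0)) = 2 / 3 ∧
      (3 : ℝ)⁻¹ * (∑ a : V, ∑ b : V,
          h a b * (if τ b < τ a then 1 else 0)) = 1 / 3 :=
  deterministic_lower_bound_general u v w huv hvw huw huniv h htour hcyc σ
end

section
/- Let V be a finite set of n elements, h a binary preference function on V, and for the random execution of QuickSort with pivots chosen uniformly at random let p_{uv} denote the probability that the pair {u,v} is compared directly (one of them chosen as pivot while both are in the same recursive call), and p_{uvw} the probability that all three of u,v,w are in the same recursive call when one of them is first chosen as pivot. Then for any function Z on unordered pairs of V: Σ_{u<v} Z_{uv} = Σ_{u<v} p_{uv}·Z_{uv} + Σ_{u<v<w} p_{uvw}·γ[Z]_{uvw}, where γ[Z]_{uvw} = (1/3)[(h(u,v)h(v,w)+h(w,v)h(v,u))Z_{uw} + (h(v,u)h(u,w)+h(w,u)h(u,v))Z_{vw} + (h(u,w)h(w,v)+h(v,w)h(w,u))Z_{uv}]. -/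
variable {V : Type*} [DecidableEq V]

/-- QuickSort on a list using a (possibly non-transitive) preference function:
the head is the pivot, elements preferred to the pivot go left.  Running it on
a uniformly random permutation of the input is equivalent to uniformly random
pivot selection. -/
def qsort (h : V → V → Bool) : List V → List V
  | [] => []
  | x :: xs =>
      qsort h (xs.filter (fun y => h y x)) ++ x :: qsort h (xs.filter (fun y => !(h y x)))
  termination_by l => l.length
  decreasing_by
    · simp only [List.length_cons]; exact Nat.lt_succ_of_le (by simp; exact (List.length_filter_le _ _).trans (by simp))
    · simp only [List.length_cons]; exact Nat.lt_succ_of_le (by simp; exact (List.length_filter_le _ _).trans (by simp))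

/-- The unordered pairs compared directly (pivot vs. element of its call). -/
def directPairs (h : V → V → Bool) : List V → List (Finset V)
  | [] => []
  | x :: xs =>
      xs.map (fun y => ({x, y} : Finset V)) ++
      (directPairs h (xs.filter (fun y => h y x)) ++
        directPairs h (xs.filter (fun y => !(h y x))))
  termination_by l => l.length
  decreasing_by
    · simp only [List.length_cons]; exact Nat.lt_succ_of_le (by simp; exact (List.length_filter_le _ _).trans (by simp))
    · simp only [List.length_cons]; exact Nat.lt_succ_of_le (by simp; exact (List.length_filter_le _ _).trans (by simp))

/-- The unordered triples present together in a recursive call whose pivot is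
one of them. -/
def pivotTriples (h : V → V → Bool) : List V → List (Finset V)
  | [] => []
  | x :: xs =>
      (xs.product xs).map (fun p => ({x, p.1, p.2} : Finset V)) ++
      (pivotTriples h (xs.filter (fun y => h y x)) ++
        pivotTriples h (xs.filter (fun y => !(h y x))))
  termination_by l => l.length
  decreasing_by
    · simp only [List.length_cons]; exact Nat.lt_succ_of_le (by simp; exact (List.length_filter_le _ _).trans (by simp))
    · simp only [List.length_cons]; exact Nat.lt_succ_of_le (by simp; exact (List.length_filter_le _ _).trans (by simp))

/-- Expectation of `f` of the input list over a uniformly random ordering of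
`V` (equivalently, over the random bits of QuickSort's pivot choices). -/
noncomputable def qsExp [Fintype V] (f : List V → ℝ) : ℝ :=
  (((Finset.univ : Finset V).toList.permutations.map f).sum) /
    (Nat.factorial (Fintype.card V))

/-- p_{uv}: the probability that the pair {u,v} is compared directly. -/
noncomputable def pPair [Fintype V] (h : V → V → Bool) (u v : V) : ℝ :=
  qsExp (fun l => if ({u, v} : Finset V) ∈ directPairs h l then 1 else 0)

/-- p_{uvw}: the probability that u, v, w are in the same recursive call when
one of them is first chosen as pivot. -/
noncomputable def pTriple [Fintype V] (h : V → V → Bool) (u v w : V) : ℝ :=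
  qsExp (fun l => if ({u, v, w} : Finset V) ∈ pivotTriples h l then 1 else 0)

/-- The {0,1}-valued preference function as a real number. -/
def hr (h : V → V → Bool) (a b : V) : ℝ := if h a b then 1 else 0

/-- Indicator that `u` is ranked before `v` in the output list. -/
def rankBefore (l : List V) (u v : V) : ℝ := if l.idxOf u < l.idxOf v then 1 else 0

/-!
Fix a pair `u ≠ v` and an input order. Either QuickSort compares `u` and `v` directly, or the
first pivot to separate them is a third element `w` with `h u w ≠ h v w` (for a tournament `h`,
exactly the `w` of weight `h(u,w) h(w,v) + h(v,w) h(w,u) = 1`); then `u`, `v`, `w` still share a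
recursive call when `w` becomes pivot, and `w` is the first of the three in the input order.
Exactly one of these events occurs, so
`1 = p_uv + ∑_w [h u w ≠ h v w] · P(u, v, w share a pivot call and w comes first)`.
Exchanging `w` with `u` or `v` in the input is a bijection on input orders that preserves the
event that the triple shares a pivot call, so each of the three comes first with probability
`p_uvw / 3`. Multiplying by `Z_uv`, summing over pairs and regrouping (pair, third element) into
triples gives the decomposition.
-/

open Finset

theorem List.filter_tail_induction {α : Type*} {motive : List α → Prop} (nil : motive [])
    (cons : ∀ x xs, (∀ p : α → Bool, motive (xs.filter p)) → motive (x :: xs))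
    (l : List α) : motive l := by
  induction hn : l.length using Nat.strong_induction_on generalizing l with
  | _ n ih =>
    cases l with
    | nil => exact nil
    | cons x xs =>
      refine cons x xs fun p => ih _ ?_ _ rfl
      have := List.length_filter_le p xs
      simp only [List.length_cons] at hn
      omega

theorem Equiv.Perm.apply_mem_iff_of_fixed_outside {α : Type*} {s : Set α} {σ : Equiv.Perm α}
    (hσ : ∀ y ∉ s, σ y = y) (y : α) : σ y ∈ s ↔ y ∈ s := by
  by_cases hy : y ∈ s
  · refine iff_of_true ?_ hy
    by_contra hσy
    exact hσy (by rw [σ.injective (hσ _ hσy)]; exact hy)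
  · rw [hσ y hy]

theorem mem_head_append_sides_iff {α : Type*} (h : α → α → Bool) {x u : α} {xs : List α}
    {S : Finset α} {F : List α → List (Finset α)}
    (hF : ∀ {l S z}, S ∈ F l → z ∈ S → z ∈ l)
    {head : List (Finset α)} (hhead : ∀ T ∈ head, x ∈ T) (hx : x ∉ S) (hu : u ∈ S) :
    S ∈ head ++ (F (xs.filter fun y => h y x) ++ F (xs.filter fun y => !h y x)) ↔
      S ∈ F (xs.filter fun y => h y x == h u x) := by
  have side {p : α → Bool} (hS : S ∈ F (xs.filter p)) : p u = true :=
    (List.mem_filter.1 (hF hS hu)).2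
  simp only [List.mem_append]
  cases hux : h u x
  · simp only [beq_false]
    refine ⟨?_, fun hS => Or.inr (Or.inr hS)⟩
    rintro (hS | hS | hS)
    · exact absurd (hhead _ hS) hx
    · simpa [hux] using side hS
    · exact hS
  · simp only [beq_true]
    refine ⟨?_, fun hS => Or.inr (Or.inl hS)⟩
    rintro (hS | hS | hS)
    · exact absurd (hhead _ hS) hx
    · exact hS
    · simpa [hux] using side hS

section QuickSort

variable (h : V → V → Bool) {x u : V} {xs l : List V} {S : Finset V}

theorem mem_of_mem_directPairs {z : V} (hS : S ∈ directPairs h l) (hz : z ∈ S) : z ∈ l := by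
  induction l using List.filter_tail_induction generalizing S with
  | nil => simp [directPairs] at hS
  | cons x xs ih =>
    rw [directPairs] at hS
    simp only [List.mem_append, List.mem_map] at hS
    rcases hS with ⟨y, hy, rfl⟩ | hS | hS
    · simp only [mem_insert, mem_singleton] at hz
      rcases hz with rfl | rfl <;> simp [hy]
    all_goals exact List.mem_cons_of_mem _ (List.mem_of_mem_filter (ih _ hS hz))

theorem mem_of_mem_pivotTriples {z : V} (hS : S ∈ pivotTriples h l) (hz : z ∈ S) : z ∈ l := by
  induction l using List.filter_tail_induction generalizing S with
  | nil => simp [pivotTriples] at hS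
  | cons x xs ih =>
    rw [pivotTriples] at hS
    simp only [List.mem_append, List.mem_map] at hS
    rcases hS with ⟨⟨a, b⟩, hab, rfl⟩ | hS | hS
    · rw [List.pair_mem_product] at hab
      simp only [mem_insert, mem_singleton] at hz
      rcases hz with rfl | rfl | rfl <;> simp [hab]
    all_goals exact List.mem_cons_of_mem _ (List.mem_of_mem_filter (ih _ hS hz))

theorem mem_directPairs_cons_iff (hx : x ∉ S) (hu : u ∈ S) :
    S ∈ directPairs h (x :: xs) ↔ S ∈ directPairs h (xs.filter fun y => h y x == h u x) := by
  rw [directPairs]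
  exact mem_head_append_sides_iff h (mem_of_mem_directPairs h) (by simp) hx hu

theorem mem_pivotTriples_cons_iff (hx : x ∉ S) (hu : u ∈ S) :
    S ∈ pivotTriples h (x :: xs) ↔
      S ∈ pivotTriples h (xs.filter fun y => h y x == h u x) := by
  rw [pivotTriples]
  refine mem_head_append_sides_iff h (mem_of_mem_pivotTriples h) ?_ hx hu
  simp only [List.mem_map]
  rintro _ ⟨_, -, rfl⟩
  simp

theorem pair_mem_directPairs_cons {y : V} (hy : y ∈ xs) : {x, y} ∈ directPairs h (x :: xs) := by
  rw [directPairs]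
  exact List.mem_append_left _ (List.mem_map_of_mem hy)

theorem mem_pivotTriples_cons_of_mem (hS : #S = 3) (hx : x ∈ S) :
    S ∈ pivotTriples h (x :: xs) ↔ ∀ z ∈ S, z ∈ x :: xs := by
  refine ⟨fun hm z hz => mem_of_mem_pivotTriples h hm hz, fun hsub => ?_⟩
  obtain ⟨a, b, -, hab⟩ :=
    card_eq_two.1 (show #(S.erase x) = 2 by rw [card_erase_of_mem hx, hS])
  have mem_tail {z : V} (hz : z ∈ S.erase x) : z ∈ xs :=
    (List.mem_cons.1 (hsub z (mem_of_mem_erase hz))).resolve_left (ne_of_mem_erase hz)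
  rw [pivotTriples]
  refine List.mem_append_left _ (List.mem_map.2 ⟨(a, b), ?_, ?_⟩)
  · exact List.pair_mem_product.2 ⟨mem_tail (by simp [hab]), mem_tail (by simp [hab])⟩
  · rw [← insert_erase hx, hab]

-- The first element of `l` lying in `S` is the first of them to become a pivot: QuickSort
-- pivots on the head of each call, and filtering preserves the order.
def triplePivot (S : Finset V) (l : List V) : Option V :=
  if S ∈ pivotTriples h l then l.find? (· ∈ S) else none

theorem triplePivot_cons_of_mem (hx : x ∈ S) :
    triplePivot h S (x :: xs) = if S ∈ pivotTriples h (x :: xs) then some x else none := by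
  simp [triplePivot, hx]

theorem triplePivot_cons_of_not_mem (hx : x ∉ S) (hu : u ∈ S) :
    triplePivot h S (x :: xs) = triplePivot h S (xs.filter fun y => h y x == h u x) := by
  unfold triplePivot
  simp only [mem_pivotTriples_cons_iff h hx hu]
  split_ifs with hS
  · have hside : ∀ z ∈ S, (h z x == h u x) = true :=
      fun z hz => (List.mem_filter.1 (mem_of_mem_pivotTriples h hS hz)).2
    rw [List.find?_cons_of_neg (by simpa using hx), List.find?_filter]
    congr 1
    funext a
    by_cases ha : a ∈ S <;> simp [ha, hside a]
  · rfl

theorem triplePivot_eq_none_of_not_mem {z : V} (hz : z ∈ S) (hzl : z ∉ l) :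
    triplePivot h S l = none :=
  if_neg fun hS => hzl (mem_of_mem_pivotTriples h hS hz)

theorem indicator_mem_pivotTriples_eq_sum (hS : #S = 3) :
    (if S ∈ pivotTriples h l then 1 else 0 : ℝ) =
      ∑ z ∈ S, if triplePivot h S l = some z then 1 else 0 := by
  unfold triplePivot
  by_cases hmem : S ∈ pivotTriples h l
  · obtain ⟨y, hy⟩ := card_pos.1 (by omega : 0 < #S)
    obtain ⟨z, hz⟩ := Option.isSome_iff_exists.1 <| (List.find?_isSome (p := (· ∈ S))).2
      ⟨y, mem_of_mem_pivotTriples h hmem hy, by simpa using hy⟩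
    have hzS : z ∈ S := by simpa using List.find?_some hz
    simp [hmem, hz, hzS]
  · simp [hmem]

theorem mem_pivotTriples_map_iff (hS : #S = 3) {σ : Equiv.Perm V} (hσ : ∀ y ∉ S, σ y = y) :
    S ∈ pivotTriples h (l.map σ) ↔ S ∈ pivotTriples h l := by
  have hσS : ∀ y, σ y ∈ S ↔ y ∈ S :=
    Equiv.Perm.apply_mem_iff_of_fixed_outside (s := (S : Set V)) hσ
  obtain ⟨u, hu⟩ := card_pos.1 (by omega : 0 < #S)
  induction l using List.filter_tail_induction with
  | nil => simp
  | cons x xs ih =>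
    by_cases hx : x ∈ S
    · rw [List.map_cons, mem_pivotTriples_cons_of_mem h hS ((hσS x).2 hx), ← List.map_cons,
        mem_pivotTriples_cons_of_mem h hS hx]
      simp only [List.mem_map]
      constructor
      · intro H z hz
        obtain ⟨y, hy, hyz⟩ := H (σ z) ((hσS z).2 hz)
        rwa [← σ.injective hyz]
      · intro H z hz
        exact ⟨σ.symm z, H _ ((hσS _).1 (by simpa using hz)), by simp⟩
    · rw [List.map_cons, hσ x hx, mem_pivotTriples_cons_iff h hx hu,
        mem_pivotTriples_cons_iff h hx hu]
      by_cases hall : ∀ z ∈ S, h z x = h u x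
      · have hcomm : ((fun y => h y x == h u x) ∘ σ) = fun y => h y x == h u x := by
          funext y
          by_cases hy : y ∈ S
          · simp [hall y hy, hall (σ y) ((hσS y).2 hy)]
          · simp [hσ y hy]
        rw [List.filter_map, hcomm]
        exact ih _
      · have hnot (m : List V) : S ∉ pivotTriples h (m.filter fun y => h y x == h u x) :=
          fun hm => hall fun z hz => by
            simpa using (List.mem_filter.1 (mem_of_mem_pivotTriples h hm hz)).2
        exact iff_of_false (hnot _) (hnot _)

theorem triplePivot_map (hS : #S = 3) {σ : Equiv.Perm V} (hσ : ∀ y ∉ S, σ y = y) :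
    triplePivot h S (l.map σ) = (triplePivot h S l).map σ := by
  have hσS : ∀ y, σ y ∈ S ↔ y ∈ S :=
    Equiv.Perm.apply_mem_iff_of_fixed_outside (s := (S : Set V)) hσ
  unfold triplePivot
  simp only [mem_pivotTriples_map_iff h hS hσ, List.find?_map]
  split_ifs
  · congr 2
    funext y
    simp [hσS]
  · rfl

variable [Fintype V] {v : V}

def indirectPivots (u v : V) (l : List V) : Finset V :=
  {w | w ≠ u ∧ w ≠ v ∧ h u w ≠ h v w ∧ triplePivot h {u, v, w} l = some w}

theorem indirectPivots_cons_of_pivot (hx : x = u ∨ x = v) :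
    indirectPivots h u v (x :: xs) = ∅ := by
  refine filter_eq_empty_iff.2 fun w _ ⟨hwu, hwv, _, hw⟩ => ?_
  rw [triplePivot_cons_of_mem h (by rcases hx with rfl | rfl <;> simp)] at hw
  split_ifs at hw
  obtain rfl := Option.some.inj hw
  rcases hx with rfl | rfl <;> contradiction

theorem indirectPivots_cons_of_same_side (hxu : x ≠ u) (hxv : x ≠ v) (hsame : h u x = h v x) :
    indirectPivots h u v (x :: xs) =
      indirectPivots h u v (xs.filter fun y => h y x == h u x) := by
  refine filter_congr fun w _ => ?_
  by_cases hwx : w = x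
  · rw [hwx]
    exact iff_of_false (fun hw => hw.2.2.1 hsame) (fun hw => hw.2.2.1 hsame)
  · rw [triplePivot_cons_of_not_mem h (u := u) (by simp [hxu, hxv, Ne.symm hwx]) (by simp)]

theorem indirectPivots_cons_of_split (huv : u ≠ v) (hxu : x ≠ u) (hxv : x ≠ v)
    (hsplit : h u x ≠ h v x) (hu : u ∈ xs) (hv : v ∈ xs) :
    indirectPivots h u v (x :: xs) = {x} := by
  refine eq_singleton_iff_unique_mem.2 ⟨?_, fun w hw => ?_⟩
  · have hcard : #{u, v, x} = 3 :=
      card_eq_three.2 ⟨u, v, x, huv, Ne.symm hxu, Ne.symm hxv, rfl⟩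
    refine mem_filter.2 ⟨mem_univ _, hxu, hxv, hsplit, ?_⟩
    rw [triplePivot_cons_of_mem h (by simp),
      if_pos ((mem_pivotTriples_cons_of_mem h hcard (by simp)).2 (by simp [hu, hv]))]
  · obtain ⟨-, hwu, hwv, -, hw⟩ := mem_filter.1 hw
    by_contra hwx
    have hvL : v ∉ xs.filter fun y => h y x == h u x :=
      fun hvL => hsplit (beq_iff_eq.1 (List.mem_filter.1 hvL).2).symm
    rw [triplePivot_cons_of_not_mem h (u := u) (by simp [hxu, hxv, Ne.symm hwx]) (by simp),
      triplePivot_eq_none_of_not_mem h (by simp) hvL] at hw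
    contradiction

theorem directPairs_indicator_add_card_indirectPivots (huv : u ≠ v) (hu : u ∈ l)
    (hv : v ∈ l) :
    (if {u, v} ∈ directPairs h l then 1 else 0) + #(indirectPivots h u v l) = 1 := by
  induction l using List.filter_tail_induction with
  | nil => simp at hu
  | cons x xs ih =>
    by_cases hx : x = u ∨ x = v
    · have hdir : {u, v} ∈ directPairs h (x :: xs) := by
        rcases hx with rfl | rfl
        · exact pair_mem_directPairs_cons h ((List.mem_cons.1 hv).resolve_left huv.symm)
        · rw [pair_comm]
          exact pair_mem_directPairs_cons h ((List.mem_cons.1 hu).resolve_left huv)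
      rw [if_pos hdir, indirectPivots_cons_of_pivot h hx, card_empty]
    obtain ⟨hxu, hxv⟩ := not_or.1 hx
    have hu' : u ∈ xs := (List.mem_cons.1 hu).resolve_left (Ne.symm hxu)
    have hv' : v ∈ xs := (List.mem_cons.1 hv).resolve_left (Ne.symm hxv)
    have hdir := mem_directPairs_cons_iff h (x := x) (xs := xs) (S := {u, v})
      (by simp [hxu, hxv]) (mem_insert_self u {v})
    by_cases hsame : h u x = h v x
    · simp only [hdir, indirectPivots_cons_of_same_side h hxu hxv hsame]
      exact ih _ (List.mem_filter.2 ⟨hu', by simp⟩)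
        (List.mem_filter.2 ⟨hv', by simp [hsame]⟩)
    · have hvL : v ∉ xs.filter fun y => h y x == h u x :=
        fun hvL => hsame (beq_iff_eq.1 (List.mem_filter.1 hvL).2).symm
      rw [if_neg fun hm => hvL (mem_of_mem_directPairs h (hdir.1 hm) (by simp)),
        indirectPivots_cons_of_split h huv hxu hxv hsame hu' hv', card_singleton]

end QuickSort

section Expectation

variable {α : Type*} [Fintype α]

theorem qsExp_congr {f g : List α → ℝ}
    (hfg : ∀ l, l.Perm (univ : Finset α).toList → f l = g l) : qsExp f = qsExp g := by
  unfold qsExp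
  congr 2
  exact List.map_congr_left fun l hl => hfg l (List.mem_permutations.1 hl)

theorem qsExp_const (c : ℝ) : qsExp (fun _ : List α => c) = c := by
  simp [qsExp, List.length_permutations, length_toList, card_univ, Nat.factorial_ne_zero]

theorem qsExp_add (f g : List α → ℝ) : qsExp (fun l => f l + g l) = qsExp f + qsExp g := by
  simp only [qsExp, List.sum_map_add, add_div]

theorem qsExp_sum {ι : Type*} (s : Finset ι) (f : ι → List α → ℝ) :
    qsExp (fun l => ∑ i ∈ s, f i l) = ∑ i ∈ s, qsExp (f i) := by
  classical
  induction s using Finset.induction_on with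
  | empty => simpa using qsExp_const (0 : ℝ)
  | insert i s hi ih => simp only [sum_insert hi, qsExp_add, ih]

theorem qsExp_comp_map (σ : Equiv.Perm α) (f : List α → ℝ) :
    qsExp (fun l => f (l.map σ)) = qsExp f := by
  have hperm : ((univ : Finset α).toList.map σ).Perm univ.toList :=
    (List.perm_ext_iff_of_nodup ((nodup_toList _).map σ.injective) (nodup_toList _)).2
      fun a => by simpa using σ.surjective a
  unfold qsExp
  rw [← (hperm.permutations.map f).sum_eq, ← List.map_permutations, List.map_map]
  rfl

end Expectation

theorem hr_mul_add_hr_mul_eq_ite {α : Type*} (h : α → α → Bool)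
    (htour : ∀ a b : α, a ≠ b → h a b = !h b a) {u v w : α} (hwu : w ≠ u)
    (hwv : w ≠ v) :
    hr h u w * hr h w v + hr h v w * hr h w u = if h u w ≠ h v w then 1 else 0 := by
  simp only [hr, htour w v hwv, htour w u hwu]
  cases h u w <;> cases h v w <;> norm_num

section Probabilities

variable [Fintype V] (h : V → V → Bool)

theorem qsExp_triplePivot_eq_some {S : Finset V} (hS : #S = 3) {z w : V} (hz : z ∈ S)
    (hw : w ∈ S) :
    qsExp (fun l => if triplePivot h S l = some z then 1 else 0) =
      qsExp (fun l => if triplePivot h S l = some w then 1 else 0) := by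
  have hσ : ∀ y ∉ S, Equiv.swap z w y = y := fun y hy =>
    Equiv.swap_apply_of_ne_of_ne (fun e => hy (e ▸ hz)) (fun e => hy (e ▸ hw))
  rw [← qsExp_comp_map (Equiv.swap z w) (fun l => if triplePivot h S l = some w then 1 else 0)]
  congr 1
  funext l
  simp [triplePivot_map h hS hσ, Option.map_eq_some_iff, Equiv.swap_apply_eq_iff]

theorem pTriple_eq_three_mul {u v w : V} (huv : u ≠ v) (huw : u ≠ w) (hvw : v ≠ w) :
    pTriple h u v w =
      3 * qsExp (fun l => if triplePivot h {u, v, w} l = some w then 1 else 0) := by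
  have hS : #{u, v, w} = 3 := card_eq_three.2 ⟨u, v, w, huv, huw, hvw, rfl⟩
  calc pTriple h u v w
      = qsExp (fun l =>
          ∑ z ∈ {u, v, w}, if triplePivot h {u, v, w} l = some z then 1 else 0) := by
        unfold pTriple
        simp only [indicator_mem_pivotTriples_eq_sum h hS]
    _ = ∑ z ∈ {u, v, w}, qsExp (fun l => if triplePivot h {u, v, w} l = some z then 1 else 0) :=
        qsExp_sum _ _
    _ = 3 * qsExp (fun l => if triplePivot h {u, v, w} l = some w then 1 else 0) := by
        rw [sum_congr rfl fun z hz => qsExp_triplePivot_eq_some h hS hz (w := w) (by simp),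
          sum_const, hS, nsmul_eq_mul, Nat.cast_ofNat]

theorem pPair_add_sum_pTriple (htour : ∀ a b : V, a ≠ b → h a b = !h b a) {u v : V}
    (huv : u ≠ v) :
    pPair h u v + ∑ w ∈ univ.filter (fun w : V => w ≠ u ∧ w ≠ v),
      1 / 3 * ((hr h u w * hr h w v + hr h v w * hr h w u) * pTriple h u v w) = 1 := by
  have hterm : ∀ w ∈ univ.filter (fun w : V => w ≠ u ∧ w ≠ v),
      1 / 3 * ((hr h u w * hr h w v + hr h v w * hr h w u) * pTriple h u v w) =
        qsExp (fun l =>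
          if h u w ≠ h v w ∧ triplePivot h {u, v, w} l = some w then 1 else 0) := by
    intro w hw
    obtain ⟨hwu, hwv⟩ := (mem_filter.1 hw).2
    rw [hr_mul_add_hr_mul_eq_ite h htour hwu hwv,
      pTriple_eq_three_mul h huv (Ne.symm hwu) (Ne.symm hwv)]
    by_cases hsep : h u w ≠ h v w
    · simp [hsep]
    · simpa [hsep] using (qsExp_const (0 : ℝ)).symm
  rw [sum_congr rfl hterm, pPair, ← qsExp_sum, ← qsExp_add]
  refine (qsExp_congr fun l hl => ?_).trans (qsExp_const 1)
  have hmem (z : V) : z ∈ l := hl.mem_iff.2 (mem_toList.2 (mem_univ z))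
  rw [sum_boole, filter_filter]
  simp only [and_assoc]
  exact_mod_cast directPairs_indicator_add_card_indirectPivots h huv (hmem u) (hmem v)

theorem pTriple_eq_of_eq {a b c a' b' c' : V} (habc : ({a, b, c} : Finset V) = {a', b', c'}) :
    pTriple h a b c = pTriple h a' b' c' := by
  simp only [pTriple, habc]

end Probabilities

theorem Finset.sum_lt_pair_sum_ne_eq_sum_lt_triple {α M : Type*} [Fintype α] [DecidableEq α]
    [LinearOrder α] [AddCommMonoid M] (F : α → α → α → M) :
    ∑ p ∈ univ.filter (fun p : α × α => p.1 < p.2),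
        ∑ w ∈ univ.filter (fun w : α => w ≠ p.1 ∧ w ≠ p.2), F p.1 p.2 w =
      ∑ t ∈ univ.filter (fun t : α × α × α => t.1 < t.2.1 ∧ t.2.1 < t.2.2),
        (F t.2.1 t.2.2 t.1 + F t.1 t.2.2 t.2.1 + F t.1 t.2.1 t.2.2) := by
  simp only [sum_filter, Fintype.sum_prod_type]
  calc ∑ a, ∑ b, (if a < b then ∑ c, if c ≠ a ∧ c ≠ b then F a b c else 0 else 0)
      = ∑ a, ∑ b, ∑ c, ((if c < a ∧ a < b then F a b c else 0) +
          (if a < c ∧ c < b then F a b c else 0) + (if a < b ∧ b < c then F a b c else 0)) := by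
        refine Fintype.sum_congr _ _ fun a => Fintype.sum_congr _ _ fun b => ?_
        rw [ite_sum_zero]
        refine Fintype.sum_congr _ _ fun c => ?_
        split_ifs <;> grind
      _ = _ := by
        simp only [ite_add_zero, sum_add_distrib]
        congr 1
        congr 1
        · conv_lhs => arg 2; ext a; rw [sum_comm]
          conv_lhs => rw [sum_comm]
        · conv_lhs => arg 2; ext a; rw [sum_comm]

/-- QuickSort decomposition, first part: a sum of a pair
function decomposes according to direct and indirect (pivot) charging. -/
theorem quicksort_decomposition_pairs [Fintype V] [LinearOrder V]
    (h : V → V → Bool) (htour : ∀ a b : V, a ≠ b → h a b = !h b a)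
    (Z : Finset V → ℝ) :
    ∑ p ∈ Finset.univ.filter (fun p : V × V => p.1 < p.2), Z {p.1, p.2}
      = (∑ p ∈ Finset.univ.filter (fun p : V × V => p.1 < p.2),
          pPair h p.1 p.2 * Z {p.1, p.2})
        + ∑ t ∈ Finset.univ.filter
            (fun t : V × V × V => t.1 < t.2.1 ∧ t.2.1 < t.2.2),
          pTriple h t.1 t.2.1 t.2.2 *
            ((1 / 3 : ℝ) *
              ((hr h t.1 t.2.1 * hr h t.2.1 t.2.2 + hr h t.2.2 t.2.1 * hr h t.2.1 t.1) *
                  Z {t.1, t.2.2}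
                + (hr h t.2.1 t.1 * hr h t.1 t.2.2 + hr h t.2.2 t.1 * hr h t.1 t.2.1) *
                  Z {t.2.1, t.2.2}
                + (hr h t.1 t.2.2 * hr h t.2.2 t.2.1 + hr h t.2.1 t.2.2 * hr h t.2.2 t.1) *
                  Z {t.1, t.2.1})) := by
  have hpair : ∀ p ∈ univ.filter (fun p : V × V => p.1 < p.2),
      Z {p.1, p.2} = pPair h p.1 p.2 * Z {p.1, p.2} +
        ∑ w ∈ univ.filter (fun w : V => w ≠ p.1 ∧ w ≠ p.2),
          1 / 3 * ((hr h p.1 w * hr h w p.2 + hr h p.2 w * hr h w p.1) * pTriple h p.1 p.2 w) *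
            Z {p.1, p.2} := fun p hp => by
    rw [← sum_mul, ← add_mul,
      pPair_add_sum_pTriple h htour (mem_filter.1 hp).2.ne, one_mul]
  have hreindex := Finset.sum_lt_pair_sum_ne_eq_sum_lt_triple fun a b c : V =>
    1 / 3 * ((hr h a c * hr h c b + hr h b c * hr h c a) * pTriple h a b c) * Z {a, b}
  beta_reduce at hreindex
  rw [sum_congr rfl hpair, sum_add_distrib, hreindex]
  refine congrArg _ (sum_congr rfl fun t _ => ?_)
  have hrotate : pTriple h t.2.1 t.2.2 t.1 = pTriple h t.1 t.2.1 t.2.2 :=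
    pTriple_eq_of_eq h (by ext; simp; tauto)
  have hswap : pTriple h t.1 t.2.2 t.2.1 = pTriple h t.1 t.2.1 t.2.2 :=
    pTriple_eq_of_eq h (by rw [pair_comm])
  rw [hrotate, hswap]
  ring
end
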